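/- For real q ≥ 2 and integers n ≥ m ≥ 0, the truncation error |∏_{i≥1}(1 - 1/q^i) - ∑_{j=0}^{n-m} (-1)^j / ((q^j - 1)⋯(q - 1))| is at most 1/((q^{n-m+1} - 1)(q^{n-m} - 1)⋯(q - 1)). -/

import Mathlib

/-!
Write `D j = ∏_{k=1}^j (q^k - 1)` and `E z = ∑_j z^j / D j`; the series converges for every `z`
since `D j ≥ (q - 1)^j j!`. Because `q^(j+1) = (q^(j+1) - 1) + 1`, the coefficients satisfy
`1 / D (j+1) = q^(-(j+1)) (1 / D (j+1) + 1 / D j)`, which is the functional equation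
`E z = (1 + z/q) E (z/q)`. Iterating it `N` times and letting `N → ∞`, with `E` continuous at `0`,
gives Euler's identity `E z = ∏_{i≥1} (1 + z/q^i)`. At `z = -1` this is an alternating series
whose terms `1 / D j` decrease as soon as `q ≥ 2`, so its partial sums bracket the limit.
-/

open Finset Filter Topology

theorem Antitone.abs_sub_alternating_series_le {E : Type*} [Ring E] [LinearOrder E]
    [IsOrderedRing E] [TopologicalSpace E] [OrderClosedTopology E] {l : E} {f : ℕ → E}
    (hfl : Tendsto (fun n ↦ ∑ i ∈ range n, (-1) ^ i * f i) atTop (𝓝 l))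
    (hfa : Antitone f) (n : ℕ) : |l - ∑ i ∈ range n, (-1) ^ i * f i| ≤ f n := by
  rw [abs_le]
  rcases Nat.even_or_odd' n with ⟨k, rfl | rfl⟩
  · have hlo := hfa.alternating_series_le_tendsto hfl k
    have hhi := hfa.tendsto_le_alternating_series hfl k
    rw [sum_range_succ, pow_mul, neg_one_sq, one_pow, one_mul] at hhi
    have hf : 0 ≤ f (2 * k) := (le_add_iff_nonneg_right _).1 (hlo.trans hhi)
    exact ⟨(neg_nonpos.2 hf).trans (sub_nonneg.2 hlo), sub_le_iff_le_add'.2 hhi⟩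
  · have hhi := hfa.tendsto_le_alternating_series hfl k
    have hlo := hfa.alternating_series_le_tendsto hfl (k + 1)
    rw [mul_add, mul_one, sum_range_succ, pow_succ, pow_mul, neg_one_sq, one_pow, one_mul,
      neg_one_mul] at hlo
    have hf : 0 ≤ f (2 * k + 1) := neg_nonpos.1 ((add_le_iff_nonpos_right _).1 (hlo.trans hhi))
    exact ⟨le_sub_iff_add_le'.2 hlo, (sub_nonpos.2 hhi).trans hf⟩

section

variable {q : ℝ}

noncomputable def prodPowSubOne (q : ℝ) (j : ℕ) : ℝ := ∏ k ∈ Icc 1 j, (q ^ k - 1)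

lemma prodPowSubOne_zero (q : ℝ) : prodPowSubOne q 0 = 1 := by
  simp [prodPowSubOne]

lemma prodPowSubOne_succ (q : ℝ) (j : ℕ) :
    prodPowSubOne q (j + 1) = prodPowSubOne q j * (q ^ (j + 1) - 1) :=
  prod_Icc_succ_top (by omega) _

lemma prodPowSubOne_pos (hq : 1 < q) (j : ℕ) : 0 < prodPowSubOne q j :=
  prod_pos fun k hk ↦ sub_pos.2 <| one_lt_pow₀ hq (by have := (mem_Icc.1 hk).1; omega)

lemma pow_mul_factorial_le_prodPowSubOne (hq : 1 ≤ q) (j : ℕ) :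
    (q - 1) ^ j * j.factorial ≤ prodPowSubOne q j := by
  induction j with
  | zero => simp [prodPowSubOne_zero]
  | succ j ih =>
    have bernoulli : ((j + 1 : ℕ) : ℝ) * (q - 1) ≤ q ^ (j + 1) - 1 := by
      have := one_add_mul_le_pow (a := q - 1) (by linarith) (j + 1)
      rw [add_sub_cancel] at this
      linarith
    have hfac_nonneg : 0 ≤ (q - 1) ^ j * j.factorial :=
      mul_nonneg (pow_nonneg (by linarith) j) (Nat.cast_nonneg _)
    rw [prodPowSubOne_succ, pow_succ, Nat.factorial_succ, Nat.cast_mul]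
    calc (q - 1) ^ j * (q - 1) * ((j + 1 : ℕ) * j.factorial)
        = ((q - 1) ^ j * j.factorial) * ((j + 1 : ℕ) * (q - 1)) := by ring
      _ ≤ _ := mul_le_mul ih bernoulli (by positivity) (hfac_nonneg.trans ih)

lemma summable_pow_div_prodPowSubOne (hq : 1 < q) (z : ℝ) :
    Summable fun j ↦ z ^ j / prodPowSubOne q j := by
  refine (Real.summable_pow_div_factorial (|z| / (q - 1))).of_norm_bounded fun j ↦ ?_
  rw [norm_div, norm_pow, Real.norm_eq_abs, Real.norm_of_nonneg (prodPowSubOne_pos hq j).le,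
    div_pow, div_div]
  have := sub_pos.2 hq
  gcongr
  exact pow_mul_factorial_le_prodPowSubOne hq.le j

lemma antitone_one_div_prodPowSubOne (hq : 2 ≤ q) :
    Antitone fun j ↦ 1 / prodPowSubOne q j := by
  refine antitone_nat_of_succ_le fun j ↦ ?_
  have hpos := prodPowSubOne_pos (by linarith) j
  have hfactor : 1 ≤ q ^ (j + 1) - 1 := by
    linarith [le_self_pow₀ (by linarith : 1 ≤ q) (by omega : j + 1 ≠ 0)]
  rw [prodPowSubOne_succ]
  exact one_div_le_one_div_of_le hpos (le_mul_of_one_le_right hpos.le hfactor)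

noncomputable def eulerSeries (q z : ℝ) : ℝ := ∑' j, z ^ j / prodPowSubOne q j

lemma eulerSeries_eq_one_add_mul (hq : 1 < q) (z : ℝ) :
    eulerSeries q z = (1 + z / q) * eulerSeries q (z / q) := by
  set c := fun j ↦ (z / q) ^ j / prodPowSubOne q j
  have hc : Summable c := summable_pow_div_prodPowSubOne hq (z / q)
  have hterm (j : ℕ) : z ^ (j + 1) / prodPowSubOne q (j + 1) = c (j + 1) + z / q * c j := by
    have hD := prodPowSubOne_pos hq j
    have hfactor : 0 < q ^ (j + 1) - 1 := sub_pos.2 (one_lt_pow₀ hq j.succ_ne_zero)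
    have hq0 := (zero_lt_one.trans hq).ne'
    simp only [c, prodPowSubOne_succ, div_pow]
    field_simp
    ring
  rw [eulerSeries, (summable_pow_div_prodPowSubOne hq z).tsum_eq_zero_add, eulerSeries]
  simp_rw [hterm]
  rw [((summable_nat_add_iff 1).2 hc).tsum_add (hc.mul_left _), tsum_mul_left,
    hc.tsum_eq_zero_add]
  simp only [c, pow_zero, prodPowSubOne_zero, div_one]
  ring

lemma eulerSeries_eq_prod_mul (hq : 1 < q) (z : ℝ) (N : ℕ) :
    eulerSeries q z = (∏ i ∈ range N, (1 + z / q ^ (i + 1))) * eulerSeries q (z / q ^ N) := by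
  induction N with
  | zero => simp
  | succ N ih =>
    rw [ih, eulerSeries_eq_one_add_mul hq (z / q ^ N), prod_range_succ, div_div, ← pow_succ]
    ring

lemma tendsto_eulerSeries_nhds_zero (hq : 1 < q) : Tendsto (eulerSeries q) (𝓝 0) (𝓝 1) := by
  have hzero : ∑' j, (0 : ℝ) ^ j / prodPowSubOne q j = 1 := by
    rw [tsum_eq_single 0 fun j hj ↦ by simp [hj]]
    simp [prodPowSubOne_zero]
  rw [← hzero]
  refine tendsto_tsum_of_dominated_convergence (summable_pow_div_prodPowSubOne hq 1)
    (fun j ↦ ((continuous_pow j).div_const _).tendsto 0) ?_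
  filter_upwards [Metric.closedBall_mem_nhds (0 : ℝ) one_pos] with z hz j
  rw [mem_closedBall_zero_iff] at hz
  rw [norm_div, norm_pow, Real.norm_of_nonneg (prodPowSubOne_pos hq j).le, one_pow]
  gcongr
  · exact (prodPowSubOne_pos hq j).le
  · exact pow_le_one₀ (norm_nonneg z) hz

lemma hasProd_one_add_div_pow (hq : 1 < q) (z : ℝ) :
    HasProd (fun i : ℕ ↦ 1 + z / q ^ (i + 1)) (eulerSeries q z) := by
  have hmul : Multipliable fun i : ℕ ↦ 1 + z / q ^ (i + 1) := by
    refine Real.multipliable_one_add_of_summable ?_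
    simpa [pow_succ', div_mul_eq_div_div, div_eq_mul_inv, mul_comm, mul_assoc] using
      (summable_geometric_of_lt_one (by positivity) (inv_lt_one_of_one_lt₀ hq)).mul_left (z / q)
  have hshrink : Tendsto (fun N ↦ z / q ^ N) atTop (𝓝 0) :=
    tendsto_const_nhds.div_atTop (tendsto_pow_atTop_atTop_of_one_lt hq)
  -- the products `(∏_{i<N} …) * E (z / q^N)` are all equal to `E z`, and tend to `(∏' …) * 1`
  have hlim := hmul.hasProd.tendsto_prod_nat.mul ((tendsto_eulerSeries_nhds_zero hq).comp hshrink)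
  simp only [Function.comp_def, ← eulerSeries_eq_prod_mul hq, mul_one] at hlim
  exact tendsto_nhds_unique tendsto_const_nhds hlim ▸ hmul.hasProd

end

theorem truncation_error_bound_general (q : ℝ) (hq : 2 ≤ q) (m n : ℕ) :
    |(∏' i : ℕ, (1 - 1 / q ^ (i + 1))) -
        ∑ j ∈ Finset.range (n - m + 1), (-1 : ℝ) ^ j / ∏ k ∈ Finset.Icc 1 j, (q ^ k - 1)| ≤
      1 / ∏ k ∈ Finset.Icc 1 (n - m + 1), (q ^ k - 1) := by
  have hq1 : 1 < q := by linarith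
  have hprod : ∏' i : ℕ, (1 - 1 / q ^ (i + 1)) = eulerSeries q (-1) := by
    simpa [neg_div, ← sub_eq_add_neg] using (hasProd_one_add_div_pow hq1 (-1)).tprod_eq
  have hpartial : Tendsto (fun N ↦ ∑ j ∈ range N, (-1) ^ j * (1 / prodPowSubOne q j)) atTop
      (𝓝 (eulerSeries q (-1))) := by
    simpa only [mul_one_div, eulerSeries] using
      (summable_pow_div_prodPowSubOne hq1 (-1)).hasSum.tendsto_sum_nat
  rw [hprod]
  simpa only [mul_one_div, prodPowSubOne] using
    (antitone_one_div_prodPowSubOne hq).abs_sub_alternating_series_le hpartial (n - m + 1)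

/-- For `q ≥ 2` and `n ≥ m ≥ 0`, the truncation error of Euler's alternating series
is bounded by the first omitted term. -/
theorem truncation_error_bound (q : ℝ) (hq : 2 ≤ q) (m n : ℕ) (hmn : m ≤ n) :
    |(∏' i : ℕ, (1 - 1 / q ^ (i + 1))) -
        ∑ j ∈ Finset.range (n - m + 1), (-1 : ℝ) ^ j / ∏ k ∈ Finset.Icc 1 j, (q ^ k - 1)| ≤
      1 / ∏ k ∈ Finset.Icc 1 (n - m + 1), (q ^ k - 1) :=
  truncation_error_bound_general q hq m n
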